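/- arXiv:math/0308035 — 3 statements merged into one kernel-verified Lean document; each statement's English description precedes it below -/
import Mathlib

section
/- Let B be a nonnegative integrable real-valued random variable on a probability space, let λ > 0, and set ρ = λ·E[B]. Suppose r : ℕ → ℝ satisfies r 0 = 1, r n ≥ 0 for all n, and r (n+1) ≤ 1 − E[exp(−λ · (r n) · B)] for all n. Then r n ≤ ρ^n for all n ≥ 0. -/
/-!
Since `1 - exp (-x) ≤ x`, taking expectations gives `1 - E[exp (-t B)] ≤ t E[B]`; with
`t = λ r n` the recursion becomes `r (n + 1) ≤ ρ r n`, and iterating from `r 0 = 1` yields `ρ ^ n`.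
-/

open MeasureTheory Real

section LaplaceTransform

variable {Ω : Type*} [MeasurableSpace Ω] {μ : Measure Ω} {X : Ω → ℝ} {t : ℝ}

theorem integrable_exp_neg_mul_of_nonneg [IsFiniteMeasure μ] (hX : AEMeasurable X μ)
    (hX0 : 0 ≤ᵐ[μ] X) (ht : 0 ≤ t) : Integrable (fun ω => exp (-(t * X ω))) μ := by
  refine (integrable_const 1).mono' (by fun_prop) ?_
  filter_upwards [hX0] with ω hω
  rw [norm_of_nonneg (exp_pos _).le, exp_le_one_iff, neg_nonpos]
  exact mul_nonneg ht hω

theorem one_sub_integral_exp_neg_mul_le [IsProbabilityMeasure μ] (hX : Integrable X μ)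
    (hX0 : 0 ≤ᵐ[μ] X) (ht : 0 ≤ t) :
    1 - ∫ ω, exp (-(t * X ω)) ∂μ ≤ t * ∫ ω, X ω ∂μ := by
  have hlinear : ∫ ω, (1 - t * X ω) ∂μ = 1 - t * ∫ ω, X ω ∂μ := by
    rw [integral_sub (integrable_const 1) (hX.const_mul t), integral_const_mul]
    simp
  have hmono : ∫ ω, (1 - t * X ω) ∂μ ≤ ∫ ω, exp (-(t * X ω)) ∂μ :=
    integral_mono ((integrable_const 1).sub (hX.const_mul t))
      (integrable_exp_neg_mul_of_nonneg hX.aemeasurable hX0 ht) fun ω => one_sub_le_exp_neg _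
  linarith

end LaplaceTransform

/-- Theorem 3.3 (core bound): if `r 0 = 1`, `r n ≥ 0` and
`r (n+1) ≤ 1 - E[exp (-λ (r n) B)]`, then `r n ≤ ρ ^ n` with `ρ = λ E[B]`. -/
theorem maxQueue_exceedance_le_rho_pow
    {Ω : Type*} [MeasureSpace Ω] [IsProbabilityMeasure (volume : Measure Ω)]
    (B : Ω → ℝ) (hBint : Integrable B) (hBnn : ∀ ω, 0 ≤ B ω)
    (lam : ℝ) (hlam : 0 < lam) (ρ : ℝ) (hρ : ρ = lam * ∫ ω, B ω)
    (r : ℕ → ℝ) (hr0 : r 0 = 1) (hrnn : ∀ n, 0 ≤ r n)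
    (hrec : ∀ n, r (n + 1) ≤ 1 - ∫ ω, Real.exp (-lam * r n * B ω)) :
    ∀ n, r n ≤ ρ ^ n := by
  have hρ0 : 0 ≤ ρ := hρ ▸ mul_nonneg hlam.le (integral_nonneg hBnn)
  have hstep (n : ℕ) : r (n + 1) ≤ ρ * r n := by
    have hlaplace := one_sub_integral_exp_neg_mul_le hBint (ae_of_all _ hBnn)
      (mul_nonneg hlam.le (hrnn n))
    have hrecn := hrec n
    simp only [neg_mul] at hrecn
    rw [hρ]
    linarith
  intro n
  simpa [hr0] using le_geom hρ0 n fun k _ => hstep k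
end

section
/- Let B be a nonnegative integrable real-valued random variable on a probability space, let λ > 0, and set ρ = λ·E[B]. Define q : ℕ → ℝ by q 0 = 1 and q (n+1) = 1 − E[exp(−λ · (q n) · B)]. Then q n ≥ 0 for all n, q (n+1) ≤ ρ · (q n) for all n, and q n ≤ (1 − E[exp(−λ·B)]) · ρ^(n−1) for all n ≥ 1. -/
open MeasureTheory Real

/-- Second half of Corollary 3.4: the sequence `q` obtained by iterating
`x ↦ 1 - E[exp (-λ B x)]` from `q 0 = 1` is nonnegative, contracts by the
factor `ρ = λ E[B]` at each step, and satisfies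
`q n ≤ (1 - E[exp (-λ B)]) ρ ^ (n - 1)` for `n ≥ 1`. -/
theorem iterated_bounds
    {Ω : Type*} [MeasureSpace Ω] [IsProbabilityMeasure (volume : Measure Ω)]
    (B : Ω → ℝ) (hBint : Integrable B) (hBnn : ∀ ω, 0 ≤ B ω)
    (lam : ℝ) (hlam : 0 < lam) (ρ : ℝ) (hρ : ρ = lam * ∫ ω, B ω)
    (q : ℕ → ℝ) (hq0 : q 0 = 1)
    (hqrec : ∀ n, q (n + 1) = 1 - ∫ ω, Real.exp (-lam * q n * B ω)) :
    (∀ n, 0 ≤ q n) ∧ (∀ n, q (n + 1) ≤ ρ * q n) ∧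
      (∀ n, 1 ≤ n → q n ≤ (1 - ∫ ω, Real.exp (-lam * B ω)) * ρ ^ (n - 1)) := by
  have hBmeas := hBint.aestronglyMeasurable
  -- integrability of the exponentials
  have hint : ∀ a : ℝ, 0 ≤ a → Integrable (fun ω => Real.exp (-lam * a * B ω)) := by
    intro a ha
    have hm : AEStronglyMeasurable (fun ω => Real.exp (-lam * a * B ω)) volume :=
      Real.continuous_exp.comp_aestronglyMeasurable (hBmeas.const_mul (-lam * a))
    refine (integrable_const (1 : ℝ)).mono' hm (Filter.Eventually.of_forall fun ω => ?_)
    rw [Real.norm_eq_abs, abs_of_pos (Real.exp_pos _)]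
    apply Real.exp_le_one_iff.mpr
    have : 0 ≤ lam * a * B ω := mul_nonneg (mul_nonneg hlam.le ha) (hBnn ω)
    linarith
  -- the exponential integral is at most 1 when a ≥ 0
  have hle1 : ∀ a : ℝ, 0 ≤ a → (∫ ω, Real.exp (-lam * a * B ω)) ≤ 1 := by
    intro a ha
    calc (∫ ω, Real.exp (-lam * a * B ω)) ≤ ∫ _ω : Ω, (1 : ℝ) := by
          refine integral_mono (hint a ha) (integrable_const 1) fun ω => ?_
          apply Real.exp_le_one_iff.mpr
          have : 0 ≤ lam * a * B ω := mul_nonneg (mul_nonneg hlam.le ha) (hBnn ω)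
          linarith
      _ = 1 := by simp
  -- nonnegativity
  have hnn : ∀ n, 0 ≤ q n := by
    intro n
    induction n with
    | zero => rw [hq0]; norm_num
    | succ n ih =>
      rw [hqrec n]
      linarith [hle1 (q n) ih]
  -- contraction
  have hρnn : 0 ≤ ρ := by
    rw [hρ]
    have : 0 ≤ ∫ ω, B ω := integral_nonneg hBnn
    positivity
  have hcontr : ∀ n, q (n + 1) ≤ ρ * q n := by
    intro n
    rw [hqrec n]
    have key : (1 : ℝ) - ρ * q n ≤ ∫ ω, Real.exp (-lam * q n * B ω) := by
      have h1 : (1 : ℝ) - ρ * q n = ∫ ω, (1 - lam * q n * B ω) := by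
        rw [integral_sub (integrable_const 1) ((hBint.const_mul _))]
        simp [hρ, integral_const_mul]
        ring
      rw [h1]
      refine integral_mono ((integrable_const 1).sub (hBint.const_mul _))
        (hint (q n) (hnn n)) fun ω => ?_
      have := Real.add_one_le_exp (-lam * q n * B ω)
      linarith
    linarith
  refine ⟨hnn, hcontr, ?_⟩
  intro n hn
  induction n with
  | zero => omega
  | succ n ih =>
    rcases Nat.eq_or_lt_of_le hn with h1 | h1
    · have : n = 0 := by omega
      subst this
      have : q 1 = 1 - ∫ ω, Real.exp (-lam * B ω) := by
        rw [hqrec 0, hq0]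
        congr 1
        congr 1
        ext ω
        ring_nf
      rw [this]
      simp
    · have hn' : 1 ≤ n := by omega
      have := ih hn'
      calc q (n + 1) ≤ ρ * q n := hcontr n
        _ ≤ ρ * ((1 - ∫ ω, Real.exp (-lam * B ω)) * ρ ^ (n - 1)) :=
            mul_le_mul_of_nonneg_left this hρnn
        _ = (1 - ∫ ω, Real.exp (-lam * B ω)) * ρ ^ (n + 1 - 1) := by
            have : n + 1 - 1 = (n - 1) + 1 := by omega
            rw [this, pow_succ]
            ring
end

section
/- Let a > 1 and define g_a : [0,∞) → ℝ by g_a(x) = 1/(x+1)² for 0 ≤ x ≤ a and g_a(x) = (a+1)^{−2}·exp(−(x−a)/(a+1)) for x > a. Then the function x ↦ log(g_a(x)) is convex on [0,∞), i.e., g_a is log-convex on [0,∞). -/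
/-!
Let `φ y = y / (a + 1) - 2 log (y + 1)` (`logTiltedPareto a`), the logarithm of the Pareto
density tilted by `exp (y / (a + 1))`. On `[0, ∞)`, `log (g_a x) = φ (min x a) - x / (a + 1)`.
Here `φ` is convex, and on `[0, a]` it is decreasing since its slope `1 / (a + 1) - 2 / (y + 1)`
is negative; a convex decreasing function of the concave function `min · a` is convex, and
subtracting a linear function keeps it so.
-/

open Real

/-- The modification of the Pareto density `f(x) = 1/(x+1)^2` obtained by
replacing its right tail beyond `a` with a matching exponential tail. -/
noncomputable def gA (a : ℝ) (x : ℝ) : ℝ :=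
  if x < 0 then 0
  else if x ≤ a then 1 / (x + 1) ^ 2
  else (a + 1) ^ (-2 : ℤ) * Real.exp (-(x - a) / (a + 1))

open Set

lemma image_min_const_Ici {a b : ℝ} (hba : b ≤ a) : (fun x => min x a) '' Ici b = Icc b a := by
  ext y
  constructor
  · rintro ⟨x, hx, rfl⟩
    exact ⟨le_min hx hba, min_le_right x a⟩
  · rintro ⟨hby, hya⟩
    exact ⟨y, hby, min_eq_left hya⟩

theorem ConvexOn.comp_min_const {f : ℝ → ℝ} {a b : ℝ} (hba : b ≤ a)
    (hf : ConvexOn ℝ (Icc b a) f) (hf' : AntitoneOn f (Icc b a)) :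
    ConvexOn ℝ (Ici b) (fun x => f (min x a)) := by
  have hmin : ConcaveOn ℝ (Ici b) (fun x => min x a) :=
    (concaveOn_id (convex_Ici b)).inf (concaveOn_const a (convex_Ici b))
  rw [← image_min_const_Ici hba] at hf hf'
  exact hf.comp_concaveOn hmin hf'

lemma concaveOn_log_add_one : ConcaveOn ℝ (Ioi (-1)) (fun y => log (y + 1)) := by
  simpa [Function.comp_def, neg_lt_iff_pos_add'] using
    strictConcaveOn_log_Ioi.concaveOn.translate_left (1 : ℝ)

noncomputable def logTiltedPareto (a y : ℝ) : ℝ := y / (a + 1) - 2 * log (y + 1)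

lemma convexOn_logTiltedPareto (a : ℝ) : ConvexOn ℝ (Ioi (-1)) (logTiltedPareto a) :=
  ((LinearMap.mulRight ℝ (a + 1)⁻¹).convexOn (convex_Ioi _)).sub
    (concaveOn_log_add_one.smul zero_le_two)

lemma antitoneOn_logTiltedPareto (a : ℝ) : AntitoneOn (logTiltedPareto a) (Ioc (-1) a) := by
  rintro x ⟨hx, -⟩ y ⟨hy, hya⟩ hxy
  have hx1 : 0 < x + 1 := by linarith
  have hy1 : 0 < y + 1 := by linarith
  have hlog : (y - x) / (y + 1) ≤ log (y + 1) - log (x + 1) := by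
    have := one_sub_inv_le_log_of_pos (div_pos hy1 hx1)
    rwa [inv_div, log_div hy1.ne' hx1.ne', one_sub_div hy1.ne', add_sub_add_right_eq_sub] at this
  have hslope : (y - x) / (a + 1) ≤ (y - x) / (y + 1) :=
    div_le_div_of_nonneg_left (by linarith) hy1 (by linarith)
  have hdiff : 0 ≤ (y - x) / (y + 1) := div_nonneg (by linarith) hy1.le
  rw [sub_div] at hslope
  unfold logTiltedPareto
  linarith

lemma log_gA {a x : ℝ} (ha : a + 1 ≠ 0) (hx : 0 ≤ x) :
    log (gA a x) = logTiltedPareto a (min x a) - x / (a + 1) := by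
  rw [gA, if_neg hx.not_gt, logTiltedPareto]
  split_ifs with hxa
  · rw [min_eq_left hxa, one_div, log_inv, log_pow]
    push_cast
    ring
  · rw [min_eq_right (not_le.1 hxa).le, log_mul (zpow_ne_zero _ ha) (exp_ne_zero _), log_zpow,
      log_exp]
    push_cast
    field_simp
    ring

/-- Section 5.2: `gA a` is log-convex on `[0, ∞)`. -/
theorem gA_logConvex (a : ℝ) (ha : 1 < a) :
    ConvexOn ℝ (Set.Ici 0) (fun x => Real.log (gA a x)) := by
  have ha0 : (0 : ℝ) ≤ a := by linarith
  have hconv : ConvexOn ℝ (Icc 0 a) (logTiltedPareto a) :=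
    (convexOn_logTiltedPareto a).subset (fun y hy => show -1 < y by linarith [hy.1])
      (convex_Icc 0 a)
  have hanti : AntitoneOn (logTiltedPareto a) (Icc 0 a) :=
    (antitoneOn_logTiltedPareto a).mono fun y hy => ⟨by linarith [hy.1], hy.2⟩
  refine ((hconv.comp_min_const ha0 hanti).sub
    ((LinearMap.mulRight ℝ (a + 1)⁻¹).concaveOn (convex_Ici 0))).congr fun x hx => ?_
  exact (log_gA (by linarith) hx).symm
end
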